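/- Let p be a prime, d a positive natural number, γ ≥ 0 a real number, and a ∈ ℚ_p nonzero. If τ_1, …, τ_n is a collection of p-adic (γ, a)-equiangular lines in ℚ_p^d and |a²·n| ≤ γ², then |n|² ≤ |d| · γ²/|a²|, where |n| and |d| denote the p-adic absolute values of the integers n and d and |a²·n| denotes the p-adic absolute value of a² times n. -/

import Mathlib

open scoped BigOperators

noncomputable section

variable {p : ℕ} [Fact p.Prime]

/-- The bilinear form `⟨x, y⟩ = ∑ i, x i * y i` on `ℚ_p^d`. -/
def pinner {d : ℕ} (x y : Fin d → ℚ_[p]) : ℚ_[p] := ∑ i, x i * y i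

/-- `⟨·, y⟩` as a linear map. -/
def pinnerL {d : ℕ} (y : Fin d → ℚ_[p]) : (Fin d → ℚ_[p]) →ₗ[ℚ_[p]] ℚ_[p] where
  toFun x := pinner x y
  map_add' x z := by simp [pinner, add_mul, Finset.sum_add_distrib]
  map_smul' c x := by simp [pinner, Finset.mul_sum, mul_assoc]

/-- The frame operator `S_τ x = ∑ j, ⟨x, τ j⟩ • τ j`. -/
def frameOp {d n : ℕ} (τ : Fin n → Fin d → ℚ_[p]) :
    (Fin d → ℚ_[p]) →ₗ[ℚ_[p]] (Fin d → ℚ_[p]) :=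
  ∑ j, (pinnerL (τ j)).smulRight (τ j)

/-- `S_τ` is similar (through an invertible operator) to a diagonal operator with
eigenvalues `λ_1, …, λ_d` satisfying `|∑ λ_j|² ≤ |d| |∑ λ_j²|`. -/
def GoodDiagonalizable {d n : ℕ} (τ : Fin n → Fin d → ℚ_[p]) : Prop :=
  ∃ (P : (Fin d → ℚ_[p]) ≃ₗ[ℚ_[p]] (Fin d → ℚ_[p])) (lam : Fin d → ℚ_[p]),
    frameOp τ = P.toLinearMap ∘ₗ Matrix.toLin' (Matrix.diagonal lam) ∘ₗ P.symm.toLinearMap ∧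
    ‖∑ j, lam j‖ ^ 2 ≤ ‖(d : ℚ_[p])‖ * ‖∑ j, lam j ^ 2‖

/-- p-adic `γ`-equiangular lines. -/
def IsPadicEquiangular {d n : ℕ} (γ : ℝ) (τ : Fin n → Fin d → ℚ_[p]) : Prop :=
  (∀ j, pinner (τ j) (τ j) = 1) ∧
  (∀ j k, j ≠ k → ‖pinner (τ j) (τ k)‖ = γ) ∧
  GoodDiagonalizable τ

/-- p-adic `(γ, a)`-equiangular lines. -/
def IsPadicEquiangularA {d n : ℕ} (γ : ℝ) (a : ℚ_[p]) (τ : Fin n → Fin d → ℚ_[p]) : Prop :=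
  (∀ j, pinner (τ j) (τ j) = a) ∧
  (∀ j k, j ≠ k → ‖pinner (τ j) (τ k)‖ = γ) ∧
  GoodDiagonalizable τ

/-! Taking traces of `S_τ` and `S_τ²` in the two descriptions of the frame operator gives
`∑ λ_j = n a` and `∑ λ_j² = ∑_{j,k} ⟨τ_j, τ_k⟩⟨τ_k, τ_j⟩`. Splitting off the diagonal, the
ultrametric inequality bounds the latter by `max (|a² n|, γ²) = γ²`, and condition (iii) turns
this into `|n a|² ≤ |d| γ²`. -/

section Trace

variable {R M ι : Type*} [CommRing R] [AddCommGroup M] [Module R M]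

lemma LinearMap.trace_comp_smulRight [Module.Free R M] [Module.Finite R M] (A : Module.End R M)
    (f : M →ₗ[R] R) (x : M) :
    LinearMap.trace R M (A ∘ₗ f.smulRight x) = f (A x) := by
  have : A ∘ₗ f.smulRight x = f.smulRight (A x) := by ext; simp
  rw [this, LinearMap.trace_smulRight]

lemma LinearMap.trace_pow_of_eq_conj_diagonal [Fintype ι] [DecidableEq ι] {S : Module.End R M}
    (P : (ι → R) ≃ₗ[R] M) {lam : ι → R}
    (hS : S = P.toLinearMap ∘ₗ Matrix.toLin' (Matrix.diagonal lam) ∘ₗ P.symm.toLinearMap)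
    (k : ℕ) :
    LinearMap.trace R M (S ^ k) = ∑ i, lam i ^ k := by
  rw [show S = P.conjAlgEquiv R (Matrix.toLin' (Matrix.diagonal lam)) from hS, ← map_pow]
  change LinearMap.trace R M (P.conj _) = _
  rw [LinearMap.trace_conj', ← Matrix.toLin'_pow, Matrix.diagonal_pow, Matrix.trace_toLin'_eq,
    Matrix.trace_diagonal]
  rfl

end Trace

lemma IsUltrametricDist.norm_sum_mul_transpose_le {K ι : Type*} [NormedField K]
    [IsUltrametricDist K] [Fintype ι] [DecidableEq ι] {G : ι → ι → K} {a : K} {γ : ℝ}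
    (hdiag : ∀ j, G j j = a) (hoff : ∀ j k, j ≠ k → ‖G j k‖ ≤ γ) :
    ‖∑ j, ∑ k, G j k * G k j‖ ≤ max ‖a ^ 2 * (Fintype.card ι : K)‖ (γ ^ 2) := by
  have hsplit : ∑ j, ∑ k, G j k * G k j
      = a ^ 2 * (Fintype.card ι : K) + ∑ j, ∑ k ∈ Finset.univ.erase j, G j k * G k j := by
    rw [Finset.sum_congr rfl fun j _ => (Finset.add_sum_erase _ _ (Finset.mem_univ j)).symm,
      Finset.sum_add_distrib]
    simp [hdiag, sq, mul_comm]
  have hoffsum : ‖∑ j, ∑ k ∈ Finset.univ.erase j, G j k * G k j‖ ≤ γ ^ 2 := by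
    refine norm_sum_le_of_forall_le_of_nonneg (sq_nonneg γ) fun j _ => ?_
    refine norm_sum_le_of_forall_le_of_nonneg (sq_nonneg γ) fun k hk => ?_
    have hkj : k ≠ j := Finset.ne_of_mem_erase hk
    rw [norm_mul, sq]
    exact mul_le_mul (hoff j k hkj.symm) (hoff k j hkj) (norm_nonneg _)
      ((norm_nonneg _).trans (hoff k j hkj))
  rw [hsplit]
  exact (norm_add_le_max _ _).trans (max_le_max le_rfl hoffsum)

section Frame

variable {d n : ℕ}

lemma frameOp_apply (τ : Fin n → Fin d → ℚ_[p]) (x : Fin d → ℚ_[p]) :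
    frameOp τ x = ∑ j, pinner x (τ j) • τ j := by
  rw [frameOp, LinearMap.sum_apply]
  rfl

lemma trace_frameOp (τ : Fin n → Fin d → ℚ_[p]) :
    LinearMap.trace ℚ_[p] _ (frameOp τ) = ∑ j, pinner (τ j) (τ j) := by
  simp only [frameOp, map_sum, LinearMap.trace_smulRight]
  rfl

lemma trace_frameOp_sq (τ : Fin n → Fin d → ℚ_[p]) :
    LinearMap.trace ℚ_[p] _ (frameOp τ ^ 2)
      = ∑ j, ∑ k, pinner (τ j) (τ k) * pinner (τ k) (τ j) := by
  rw [sq]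
  nth_rw 2 [frameOp]
  simp only [Finset.mul_sum, map_sum, Module.End.mul_eq_comp, LinearMap.trace_comp_smulRight,
    frameOp_apply, map_smul, smul_eq_mul]
  rfl

end Frame

theorem padic_vanLintSeidel_case_small_a_general {d n : ℕ}
    (γ : ℝ) (a : ℚ_[p]) (ha : a ≠ 0) (τ : Fin n → Fin d → ℚ_[p])
    (h : IsPadicEquiangularA γ a τ) (hn : ‖a ^ 2 * (n : ℚ_[p])‖ ≤ γ ^ 2) :
    ‖(n : ℚ_[p])‖ ^ 2 ≤ ‖(d : ℚ_[p])‖ * (γ ^ 2 / ‖a ^ 2‖) := by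
  obtain ⟨hself, hang, P, lam, hS, hlam⟩ := h
  have htrace : ∑ j, lam j = n * a := by
    have h1 := LinearMap.trace_pow_of_eq_conj_diagonal P hS 1
    simp only [pow_one, trace_frameOp, hself] at h1
    simp [← h1, mul_comm]
  have htrace_sq : ‖∑ j, lam j ^ 2‖ ≤ γ ^ 2 := by
    rw [← LinearMap.trace_pow_of_eq_conj_diagonal P hS 2, trace_frameOp_sq]
    refine (IsUltrametricDist.norm_sum_mul_transpose_le hself
      fun j k hjk => (hang j k hjk).le).trans ?_
    simpa using hn
  rw [mul_div_assoc', le_div_iff₀ (norm_pos_iff.mpr (pow_ne_zero 2 ha))]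
  calc ‖(n : ℚ_[p])‖ ^ 2 * ‖a ^ 2‖ = ‖∑ j, lam j‖ ^ 2 := by
        rw [htrace, norm_mul, norm_pow, mul_pow]
    _ ≤ ‖(d : ℚ_[p])‖ * ‖∑ j, lam j ^ 2‖ := hlam
    _ ≤ ‖(d : ℚ_[p])‖ * γ ^ 2 := by gcongr

theorem padic_vanLintSeidel_case_small_a {d n : ℕ} (hd : 0 < d)
    (γ : ℝ) (hγ : 0 ≤ γ) (a : ℚ_[p]) (ha : a ≠ 0) (τ : Fin n → Fin d → ℚ_[p])
    (h : IsPadicEquiangularA γ a τ) (hn : ‖a ^ 2 * (n : ℚ_[p])‖ ≤ γ ^ 2) :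
    ‖(n : ℚ_[p])‖ ^ 2 ≤ ‖(d : ℚ_[p])‖ * (γ ^ 2 / ‖a ^ 2‖) :=
  padic_vanLintSeidel_case_small_a_general γ a ha τ h hn

end
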